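/- Fix n = (3^m - 1)/2 and let S ⊆ F_3^n be the linear code with check matrix H obtained from a check matrix H* of the ternary Hamming code of length (n-1)/3 by repeating each column of H* three times and appending one all-zero column. Then the number of distinct ternary Hamming codes (linear 1-perfect codes) contained in S equals 6^{(n-1)/3} / 3^{m-1}, and the number of cosets of Hamming codes contained in S equals 6^{(n-1)/3} / 3^{m-2}. -/

import Mathlib

/-- The linear code `S ⊆ F_3^{3t+1}` whose check matrix is obtained from the check
matrix `h` (with columns `h j ∈ F_3^{m-1}`) of the ternary Hamming code of length `t`
by repeating each column three times and appending one all-zero column. -/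
def spanCode (m t : ℕ) (h : Fin t → Fin (m - 1) → ZMod 3) :
    Set (Fin (3 * t + 1) → ZMod 3) :=
  {x | ∀ r : Fin (m - 1),
    ∑ j : Fin t, h j r *
      (x ⟨3 * j.1, by have := j.2; omega⟩ + x ⟨3 * j.1 + 1, by have := j.2; omega⟩ +
        x ⟨3 * j.1 + 2, by have := j.2; omega⟩) = 0}

/-- A linear code: contains `0` and is closed under addition (over `F_3` this makes it a
subspace). -/
def IsLinearCode {N : ℕ} (D : Set (Fin N → ZMod 3)) : Prop :=
  (0 : Fin N → ZMod 3) ∈ D ∧ ∀ x ∈ D, ∀ y ∈ D, x + y ∈ D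

/-- A 1-perfect code: closed radius-1 Hamming balls around codewords partition the space. -/
def IsPerfectCode {N : ℕ} (D : Set (Fin N → ZMod 3)) : Prop :=
  ∀ x : Fin N → ZMod 3, ∃! c, c ∈ D ∧ hammingDist x c ≤ 1

/-!
Write `S = ker H`, where the last column of `H` is zero and the others are nonzero. A linear
1-perfect code `D ⊆ S` misses the unit vector `e` at the last coordinate, while decoding shows
`S = D + ⟨e⟩`; so `D = S ∩ ker g` for one extra check row `g`. Conversely `S ∩ ker g` is 1-perfect
iff the columns of `H` extended by `g` are nonzero and pairwise non-collinear (the syndrome map is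
then a bijection from the vectors of weight at most one, by counting), i.e. iff `g` is nonzero at
the last coordinate and injective on each triple of repeated columns: there are `2 · 6^t` such
rows. Two of them cut out the same code iff they differ by a nonzero scalar and a combination of
the `m - 1` independent rows of `H`, so each code comes from exactly `2 · 3^(m-1)` rows. Cosets
are counted in the same way by the pairs `(g, α)`, through `D = {x ∈ S | g ⬝ x = α}`.
-/

open Function

theorem hammingNorm_le_one_iff {ι β : Type*} [Fintype ι] [Zero β] [DecidableEq β] {x : ι → β} :
    hammingNorm x ≤ 1 ↔ ∀ i, x i ≠ 0 → ∀ j, x j ≠ 0 → i = j := by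
  simp [hammingNorm, Finset.card_le_one]

theorem hammingNorm_single_le {ι β : Type*} [Fintype ι] [DecidableEq ι] [Zero β] [DecidableEq β]
    (i : ι) (b : β) : hammingNorm (Pi.single i b : ι → β) ≤ 1 :=
  have eq_of_ne_zero (k : ι) (hk : (Pi.single i b : ι → β) k ≠ 0) : k = i :=
    by_contra fun h => hk (by simp [h])
  hammingNorm_le_one_iff.mpr fun j hj j' hj' =>
    (eq_of_ne_zero j hj).trans (eq_of_ne_zero j' hj').symm

theorem hammingDist_eq_hammingNorm_sub {ι β : Type*} [Fintype ι] [AddCommGroup β] [DecidableEq β]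
    (x y : ι → β) : hammingDist x y = hammingNorm (x - y) := by
  rw [hammingDist_comm, hammingDist_eq_hammingNorm, neg_add_eq_sub]

section Noncollinear

variable (K : Type*) {ι M : Type*} [Field K] [AddCommGroup M] [Module K M]

def Noncollinear (v : ι → M) : Prop :=
  (∀ i, v i ≠ 0) ∧ ∀ i j, i ≠ j → ∀ c : K, v i ≠ c • v j

variable {K}

theorem Noncollinear.smul_eq_smul {v : ι → M} (hv : Noncollinear K v) {i j : ι} {a b : K}
    (h : a • v i = b • v j) : a = 0 ∧ b = 0 ∨ i = j ∧ a = b := by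
  by_cases ha : a = 0
  · subst ha
    rw [zero_smul, eq_comm, smul_eq_zero] at h
    exact .inl ⟨rfl, h.resolve_right (hv.1 j)⟩
  have hij : i = j := by
    by_contra hij
    refine hv.2 i j hij (a⁻¹ * b) ?_
    rw [mul_smul, ← h, smul_smul, inv_mul_cancel₀ ha, one_smul]
  subst hij
  rw [← sub_eq_zero, ← sub_smul, smul_eq_zero, sub_eq_zero] at h
  exact .inr ⟨rfl, h.resolve_right (hv.1 i)⟩

variable [Fintype ι] [DecidableEq ι]

/-- Parametrises the vectors of Hamming weight at most one. -/
def optionSingle : Option (ι × Kˣ) → ι → K :=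
  fun o => o.elim 0 fun p => Pi.single p.1 (p.2 : K)

theorem hammingNorm_optionSingle_le [DecidableEq K] (o : Option (ι × Kˣ)) :
    hammingNorm (optionSingle o) ≤ 1 := by
  rcases o with _ | ⟨i, u⟩
  · simp [optionSingle]
  · exact hammingNorm_single_le i _

theorem exists_optionSingle_eq [DecidableEq K] {x : ι → K} (hx : hammingNorm x ≤ 1) :
    ∃ o : Option (ι × Kˣ), optionSingle o = x := by
  by_cases h0 : x = 0
  · exact ⟨none, h0.symm⟩
  obtain ⟨i, hi⟩ : ∃ i, x i ≠ 0 := by simpa [funext_iff] using h0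
  refine ⟨some (i, Units.mk0 _ hi), funext fun j => ?_⟩
  by_cases hj : j = i
  · simp [optionSingle, hj]
  · have : x j = 0 := by_contra fun hxj => hj (hammingNorm_le_one_iff.mp hx j hxj i hi)
    simp [optionSingle, hj, this]

theorem linearCombination_optionSingle (v : ι → M) (o : Option (ι × Kˣ)) :
    Fintype.linearCombination K v (optionSingle o) = o.elim 0 fun p => (p.2 : K) • v p.1 := by
  rcases o with _ | ⟨i, u⟩ <;> simp [optionSingle]

theorem Noncollinear.injective_linearCombination_optionSingle {v : ι → M}
    (hv : Noncollinear K v) :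
    Injective fun o => Fintype.linearCombination K v (optionSingle o) := by
  rintro (_ | ⟨i, u⟩) (_ | ⟨j, w⟩) h <;>
    simp only [linearCombination_optionSingle, Option.elim_none, Option.elim_some] at h
  · rfl
  · exact absurd (smul_eq_zero.mp h.symm) (by simp [hv.1 j])
  · exact absurd (smul_eq_zero.mp h) (by simp [hv.1 i])
  · rcases hv.smul_eq_smul h with ⟨hu, -⟩ | ⟨rfl, huw⟩
    · exact absurd hu u.ne_zero
    · rw [Units.val_inj.mp huw]

theorem Noncollinear.bijective_linearCombination_optionSingle [Finite K] [Finite M] {v : ι → M}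
    (hv : Noncollinear K v) (hcard : Nat.card Kˣ * Nat.card ι + 1 = Nat.card M) :
    Bijective fun o => Fintype.linearCombination K v (optionSingle o) :=
  hv.injective_linearCombination_optionSingle.bijective_of_nat_card_le <| by
    rw [Finite.card_option, Nat.card_prod, mul_comm, hcard]

theorem Noncollinear.surjective_linearCombination [Finite K] [Finite M] {v : ι → M}
    (hv : Noncollinear K v) (hcard : Nat.card Kˣ * Nat.card ι + 1 = Nat.card M) :
    Surjective (Fintype.linearCombination K v) :=
  (hv.bijective_linearCombination_optionSingle hcard).surjective.of_comp

end Noncollinear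

section RowCoset

variable {K ι M : Type*} [Field K] [Fintype ι] [AddCommGroup M] [Module K M]

theorem linearCombination_prod (v : ι → M) (g x : ι → K) :
    Fintype.linearCombination K (Function.prod v g) x =
      (Fintype.linearCombination K v x, g ⬝ᵥ x) := by
  ext <;> simp [Fintype.linearCombination_apply, Prod.fst_sum, Prod.snd_sum, dotProduct, mul_comm]

/-- The coset at syndrome `(0, α)` of the code whose check matrix has the columns `v` and the extra
row `g`. -/
def rowCoset (v : ι → M) (g : ι → K) (α : K) : Set (ι → K) :=
  {x | Fintype.linearCombination K v x = 0 ∧ g ⬝ᵥ x = α}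

theorem rowCoset_zero_eq_ker (v : ι → M) (g : ι → K) :
    rowCoset v g 0 = LinearMap.ker (Fintype.linearCombination K (Function.prod v g)) := by
  ext x
  simp [rowCoset, linearCombination_prod, Prod.ext_iff]

theorem rowCoset_subset_ker (v : ι → M) (g : ι → K) (α : K) :
    rowCoset v g α ⊆ LinearMap.ker (Fintype.linearCombination K v) :=
  fun _ hx => hx.1

theorem image_add_rowCoset_zero {v : ι → M} {p : ι → K}
    (hp : Fintype.linearCombination K v p = 0) (g : ι → K) :
    (p + ·) '' rowCoset v g 0 = rowCoset v g (g ⬝ᵥ p) := by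
  ext x
  simp [Set.image_add_left, rowCoset, hp, dotProduct_add, neg_add_eq_zero, eq_comm]

theorem exists_rowCoset_eq_image_add {v : ι → M} {g ℓ : ι → K}
    (hℓ : Fintype.linearCombination K v ℓ = 0) (hg : g ⬝ᵥ ℓ ≠ 0) (α : K) :
    ∃ p, rowCoset v g α = (p + ·) '' rowCoset v g 0 := by
  refine ⟨(α / g ⬝ᵥ ℓ) • ℓ, ?_⟩
  rw [image_add_rowCoset_zero (by rw [map_smul, hℓ, smul_zero]), dotProduct_smul, smul_eq_mul,
    div_mul_cancel₀ _ hg]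

variable {κ : Type*} [Fintype κ]

/-- The combination `∑ₖ rₖ • (row k)` of the rows of the check matrix with columns `v`. -/
def rowComb (v : ι → κ → K) (r : κ → K) : ι → K :=
  fun i => r ⬝ᵥ v i

variable {v : ι → κ → K}

theorem rowComb_dotProduct (r : κ → K) (x : ι → K) :
    rowComb v r ⬝ᵥ x = r ⬝ᵥ Fintype.linearCombination K v x := by
  simp only [rowComb, dotProduct, Fintype.linearCombination_apply, Finset.sum_apply,
    Pi.smul_apply, smul_eq_mul, Finset.sum_mul, Finset.mul_sum]
  rw [Finset.sum_comm]
  exact Finset.sum_congr rfl fun _ _ => Finset.sum_congr rfl fun _ _ => by ring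

theorem rowCoset_smul_add_rowComb {c : K} (hc : c ≠ 0) (g : ι → K) (r : κ → K) (α : K) :
    rowCoset v (c • g + rowComb v r) (c * α) = rowCoset v g α := by
  ext x
  simp only [rowCoset, Set.mem_ofPred_eq, add_dotProduct, smul_dotProduct, rowComb_dotProduct,
    smul_eq_mul]
  refine and_congr_right fun hx => ?_
  rw [hx, dotProduct_zero, add_zero, mul_right_inj' hc]

theorem exists_eq_rowComb_of_dotProduct_eq_zero [DecidableEq ι] [DecidableEq κ] {f : ι → K}
    (hf : ∀ x, Fintype.linearCombination K v x = 0 → f ⬝ᵥ x = 0) :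
    ∃ r, f = rowComb v r := by
  have hann : dotProductEquiv K ι f ∈
      (LinearMap.ker (Fintype.linearCombination K v)).dualAnnihilator :=
    (Submodule.mem_dualAnnihilator _).mpr fun x hx => hf x hx
  rw [← LinearMap.range_dualMap_eq_dualAnnihilator_ker] at hann
  obtain ⟨ψ, hψ⟩ := hann
  refine ⟨(dotProductEquiv K κ).symm ψ, dotProduct_eq _ _ fun x => ?_⟩
  rw [rowComb_dotProduct, ← dotProductEquiv_apply_apply K κ, LinearEquiv.apply_symm_apply,
    ← dotProductEquiv_apply_apply K ι, ← hψ]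
  rfl

theorem rowComb_injective (hv : Surjective (Fintype.linearCombination K v)) :
    Injective (rowComb v) := fun r r' h =>
  dotProduct_eq _ _ fun w => by
    obtain ⟨x, rfl⟩ := hv w
    rw [← rowComb_dotProduct, h, rowComb_dotProduct]

/-- The scalar `c` is read off at `ℓ`; then `g - c • g₀` vanishes on `ker v`, so it lies in the
row space. -/
theorem exists_eq_smul_add_rowComb_of_rowCoset_eq [DecidableEq ι] [DecidableEq κ]
    {g g₀ ℓ : ι → K} {α α₀ : K} (hℓ : Fintype.linearCombination K v ℓ = 0)
    (hg : g ⬝ᵥ ℓ ≠ 0) (hg₀ : g₀ ⬝ᵥ ℓ ≠ 0) (h : rowCoset v g α = rowCoset v g₀ α₀) :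
    ∃ (c : Kˣ) (r : κ → K), g = (c : K) • g₀ + rowComb v r ∧ α = c * α₀ := by
  set c := g ⬝ᵥ ℓ / g₀ ⬝ᵥ ℓ
  set p := (α₀ / g₀ ⬝ᵥ ℓ) • ℓ
  have hp₀ : p ∈ rowCoset v g₀ α₀ :=
    ⟨by simp [p, hℓ], by rw [dotProduct_smul, smul_eq_mul, div_mul_cancel₀ _ hg₀]⟩
  have hp : p ∈ rowCoset v g α := h ▸ hp₀
  have hprop : ∀ x, Fintype.linearCombination K v x = 0 → g ⬝ᵥ x = c * g₀ ⬝ᵥ x := by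
    intro x hx
    have hy : p + (x - (g₀ ⬝ᵥ x / g₀ ⬝ᵥ ℓ) • ℓ) ∈ rowCoset v g α := by
      rw [h]
      refine ⟨by simp [hp₀.1, hx, hℓ], ?_⟩
      rw [dotProduct_add, hp₀.2, dotProduct_sub, dotProduct_smul, smul_eq_mul,
        div_mul_cancel₀ _ hg₀, sub_self, add_zero]
    have hy' := hy.2
    rw [dotProduct_add, hp.2, add_eq_left, dotProduct_sub, dotProduct_smul, smul_eq_mul,
      sub_eq_zero] at hy'
    rw [hy']
    ring
  obtain ⟨r, hr⟩ := exists_eq_rowComb_of_dotProduct_eq_zero (v := v) (f := g - c • g₀)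
    fun x hx => by rw [sub_dotProduct, smul_dotProduct, hprop x hx, smul_eq_mul, sub_self]
  have hg_eq : g = c • g₀ + rowComb v r := by rw [← hr, add_sub_cancel]
  refine ⟨Units.mk0 c (div_ne_zero hg hg₀), r, hg_eq, ?_⟩
  show α = c * α₀
  rw [← hp.2, ← hp₀.2, hg_eq, add_dotProduct, smul_dotProduct, rowComb_dotProduct, hp₀.1,
    dotProduct_zero, add_zero, smul_eq_mul]

theorem smul_add_rowComb_injective (hv : Surjective (Fintype.linearCombination K v))
    {g₀ ℓ : ι → K} (hℓ : Fintype.linearCombination K v ℓ = 0) (hg₀ : g₀ ⬝ᵥ ℓ ≠ 0) :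
    Injective fun q : Kˣ × (κ → K) => (q.1 : K) • g₀ + rowComb v q.2 := by
  rintro ⟨c, r⟩ ⟨c', r'⟩ h
  have hc : (c : K) = c' := by
    have := congrArg (· ⬝ᵥ ℓ) h
    simp only [add_dotProduct, smul_dotProduct, rowComb_dotProduct, hℓ, dotProduct_zero,
      add_zero, smul_eq_mul] at this
    exact mul_right_cancel₀ hg₀ this
  simp only [hc, add_right_inj] at h
  rw [Units.val_inj.mp hc, rowComb_injective hv h]

end RowCoset

theorem natCard_units_zmod_three : Nat.card (ZMod 3)ˣ = 2 := by
  rw [Nat.card_eq_fintype_card, ZMod.card_units 3]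

section PerfectCode

variable {N : ℕ} {M : Type*} [AddCommGroup M] [Module (ZMod 3) M]

theorem hammingDist_self_sub {ι β : Type*} [Fintype ι] [AddCommGroup β] [DecidableEq β]
    (x y : ι → β) : hammingDist x (x - y) = hammingNorm y := by
  rw [hammingDist_eq_hammingNorm_sub, sub_sub_cancel]

theorem isLinearCode_coe_submodule (P : Submodule (ZMod 3) (Fin N → ZMod 3)) :
    IsLinearCode (P : Set (Fin N → ZMod 3)) :=
  ⟨P.zero_mem, fun _ hx _ hy => P.add_mem hx hy⟩

theorem IsPerfectCode.eq_of_hammingDist_le_one {D : Set (Fin N → ZMod 3)} (hD : IsPerfectCode D)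
    {x c c' : Fin N → ZMod 3} (hc : c ∈ D) (hc' : c' ∈ D) (hxc : hammingDist x c ≤ 1)
    (hxc' : hammingDist x c' ≤ 1) : c = c' :=
  (hD x).unique ⟨hc, hxc⟩ ⟨hc', hxc'⟩

/-- `x` decodes to `x - e` for the unique `e` of weight at most one with the syndrome of `x`. -/
theorem isPerfectCode_ker_of_bijective {v : Fin N → M}
    (hv : Bijective fun o => Fintype.linearCombination (ZMod 3) v (optionSingle o)) :
    IsPerfectCode
      (LinearMap.ker (Fintype.linearCombination (ZMod 3) v) : Set (Fin N → ZMod 3)) := by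
  intro x
  obtain ⟨o, ho⟩ := hv.surjective (Fintype.linearCombination (ZMod 3) v x)
  refine ⟨x - optionSingle o, ⟨by simp [ho], ?_⟩, ?_⟩
  · rw [hammingDist_self_sub]
    exact hammingNorm_optionSingle_le o
  rintro c ⟨hc, hxc⟩
  rw [hammingDist_eq_hammingNorm_sub] at hxc
  obtain ⟨o', ho'⟩ := exists_optionSingle_eq hxc
  have hoo' : o' = o := hv.injective <| by
    simp only [ho', ho, map_sub, LinearMap.mem_ker.mp hc, sub_zero]
  rw [← hoo', ho', sub_sub_cancel]

theorem Noncollinear.isPerfectCode_ker [Finite M] {v : Fin N → M}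
    (hv : Noncollinear (ZMod 3) v) (hcard : 2 * N + 1 = Nat.card M) :
    IsPerfectCode
      (LinearMap.ker (Fintype.linearCombination (ZMod 3) v) : Set (Fin N → ZMod 3)) :=
  isPerfectCode_ker_of_bijective <| hv.bijective_linearCombination_optionSingle <| by
    rwa [natCard_units_zmod_three, Nat.card_fin]

theorem IsPerfectCode.noncollinear {v : Fin N → M}
    (hD : IsPerfectCode
      (LinearMap.ker (Fintype.linearCombination (ZMod 3) v) : Set (Fin N → ZMod 3))) :
    Noncollinear (ZMod 3) v := by
  have single_eq (i : Fin N) (y : Fin N → ZMod 3)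
      (hy : Fintype.linearCombination (ZMod 3) v (Pi.single i 1 - y) = 0)
      (hy₁ : hammingNorm y ≤ 1) : Pi.single i 1 = y := by
    refine (sub_eq_zero.mp (hD.eq_of_hammingDist_le_one (x := Pi.single i 1) (zero_mem _) hy
      ?_ (by rwa [hammingDist_self_sub])).symm)
    rw [hammingDist_zero_right]
    exact hammingNorm_single_le i 1
  refine ⟨fun i hi => ?_, fun i j hij c hc => ?_⟩
  · have := congrFun (single_eq i 0 (by simp [hi]) (by simp)) i
    simp at this
  · have := congrFun (single_eq i (Pi.single j c) (by simp [hc]) (hammingNorm_single_le j c)) i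
    simp [hij] at this

def IsLinearCode.toSubmodule {D : Set (Fin N → ZMod 3)} (hD : IsLinearCode D) :
    Submodule (ZMod 3) (Fin N → ZMod 3) where
  carrier := D
  zero_mem' := hD.1
  add_mem' hx hy := hD.2 _ hx _ hy
  smul_mem' c x hx := by
    rw [← ZMod.natCast_zmod_val c, Nat.cast_smul_eq_nsmul]
    induction c.val with
    | zero => simpa using hD.1
    | succ n ih => exact succ_nsmul x n ▸ hD.2 _ ih _ hx

/-- `e = Pi.single i₀ 1` is not in `D`, and decoding shows `ker v = D + ⟨e⟩`: a functional that
vanishes on `D` but not at `e` is the extra row. -/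
theorem IsPerfectCode.exists_eq_rowCoset {κ : Type*} {v : Fin N → κ → ZMod 3}
    {D : Set (Fin N → ZMod 3)} (hperf : IsPerfectCode D) (hlin : IsLinearCode D)
    (hsub : D ⊆ LinearMap.ker (Fintype.linearCombination (ZMod 3) v)) {i₀ : Fin N}
    (hv : ∀ i, i ≠ i₀ → v i ≠ 0) :
    ∃ g, D = rowCoset v g 0 := by
  have he : Pi.single i₀ 1 ∉ hlin.toSubmodule := fun he => by
    have := hperf.eq_of_hammingDist_le_one (x := 0) hlin.1 he (by simp)
      (by rw [hammingDist_zero_left]; exact hammingNorm_single_le i₀ 1)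
    simpa using congrFun this i₀
  obtain ⟨f, hfe, hfD⟩ := hlin.toSubmodule.exists_dual_map_eq_bot_of_notMem he inferInstance
  replace hfD : ∀ x ∈ D, f x = 0 := fun x hx =>
    (Submodule.eq_bot_iff _).mp hfD _ (Submodule.mem_map_of_mem (p := hlin.toSubmodule) hx)
  refine ⟨(dotProductEquiv _ _).symm f, Set.ext fun x => ?_⟩
  simp only [rowCoset, Set.mem_ofPred_eq, ← dotProductEquiv_apply_apply,
    LinearEquiv.apply_symm_apply]
  refine ⟨fun hx => ⟨hsub hx, hfD x hx⟩, fun ⟨hx, hfx⟩ => ?_⟩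
  obtain ⟨d, ⟨hd, hxd⟩, -⟩ := hperf x
  rw [hammingDist_eq_hammingNorm_sub] at hxd
  obtain ⟨_ | ⟨i, u⟩, hxd'⟩ := exists_optionSingle_eq hxd
  · rwa [sub_eq_zero.mp hxd'.symm]
  simp only [optionSingle, Option.elim_some] at hxd'
  have hvi : (u : ZMod 3) • v i = 0 := by
    rw [← Fintype.linearCombination_apply_single, hxd', map_sub, hx,
      LinearMap.mem_ker.mp (hsub hd), sub_zero]
  have hi : i = i₀ := by_contra fun hi => hv i hi ((smul_eq_zero.mp hvi).resolve_left u.ne_zero)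
  have hfu : f (Pi.single i₀ (u : ZMod 3)) = 0 := by
    rw [← hi, hxd', map_sub, hfx, hfD d hd, sub_zero]
  have hsingle : Pi.single i₀ (u : ZMod 3) = (u : ZMod 3) • Pi.single i₀ 1 := by
    rw [← Pi.single_smul, smul_eq_mul, mul_one]
  rw [hsingle, map_smul, smul_eq_mul] at hfu
  exact absurd hfu (mul_ne_zero u.ne_zero hfe)

end PerfectCode

theorem card_eq_card_mul_of_fiber_equiv {X Y F : Type*} (f : X → Y)
    (e : ∀ y, Nonempty ({x // f x = y} ≃ F)) : Nat.card X = Nat.card Y * Nat.card F := by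
  rw [← Nat.card_prod]
  exact Nat.card_congr <| (Equiv.sigmaFiberEquiv f).symm.trans <|
    (Equiv.sigmaCongrRight fun y => (e y).some).trans (Equiv.sigmaEquivProd Y F)

namespace SpanCode

variable {t : ℕ}

/-- Coordinate `3j + p` of `Fin (3t+1)` is `some (j, p)`; the last coordinate `3t` is `none`. -/
def tripleEquiv (t : ℕ) : Option (Fin t × Fin 3) ≃ Fin (3 * t + 1) where
  toFun o := o.elim (Fin.last _) fun jp => ⟨3 * jp.1 + jp.2, by omega⟩
  invFun i := if hi : i.1 < 3 * t then some (⟨i / 3, by omega⟩, ⟨i % 3, by omega⟩) else none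
  left_inv o := by
    rcases o with _ | ⟨j, p⟩
    · simp
    · have : 3 * j.1 + p.1 < 3 * t := by omega
      simp [this, Prod.ext_iff, Fin.ext_iff]
      omega
  right_inv i := by
    by_cases hi : i.1 < 3 * t
    · simp only [dif_pos hi, Option.elim_some, Fin.ext_iff]
      omega
    · simp only [dif_neg hi, Option.elim_none, Fin.ext_iff, Fin.val_last]
      omega

@[simp]
theorem tripleEquiv_none : tripleEquiv t none = Fin.last _ := rfl

theorem tripleEquiv_some (j : Fin t) (p : Fin 3) :
    tripleEquiv t (some (j, p)) = ⟨3 * j.1 + p.1, by omega⟩ := rfl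

section Columns

variable {W : Type*} [Zero W]

/-- The columns of the check matrix of `spanCode`: each column of `h` three times, then `0`. -/
def col (h : Fin t → W) (i : Fin (3 * t + 1)) : W :=
  ((tripleEquiv t).symm i).elim 0 fun jp => h jp.1

@[simp]
theorem col_last (h : Fin t → W) : col h (Fin.last _) = 0 := by
  simp [col, ← tripleEquiv_none]

@[simp]
theorem col_tripleEquiv_some (h : Fin t → W) (j : Fin t) (p : Fin 3) :
    col h (tripleEquiv t (some (j, p))) = h j := by
  simp [col]

theorem col_ne_zero {h : Fin t → W} (hh : ∀ j, h j ≠ 0) {i : Fin (3 * t + 1)}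
    (hi : i ≠ Fin.last _) : col h i ≠ 0 := by
  obtain ⟨_ | ⟨j, p⟩, rfl⟩ := (tripleEquiv t).surjective i
  · exact absurd rfl hi
  · simpa using hh j

end Columns

section Rows

variable {K W : Type*} [Field K] [AddCommGroup W] [Module K W] {h : Fin t → W}

theorem surjective_linearCombination_col [Finite K] [Finite W] (hh : Noncollinear K h)
    (hcard : Nat.card Kˣ * t + 1 = Nat.card W) :
    Surjective (Fintype.linearCombination K (col h)) := by
  have hspan := (span_range_eq_top_iff_surjective_fintypeLinearCombination K h).mpr
    (hh.surjective_linearCombination (by rwa [Nat.card_fin]))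
  rw [← span_range_eq_top_iff_surjective_fintypeLinearCombination]
  refine eq_top_mono (Submodule.span_mono ?_) hspan
  rintro _ ⟨j, rfl⟩
  exact ⟨_, col_tripleEquiv_some h j 0⟩

theorem noncollinear_prod_col_iff (hh : Noncollinear K h) (g : Fin (3 * t + 1) → K) :
    Noncollinear K (Function.prod (col h) g) ↔
      g (Fin.last _) ≠ 0 ∧ ∀ j, Injective fun p => g (tripleEquiv t (some (j, p))) := by
  constructor
  · rintro ⟨hnz, hnc⟩
    refine ⟨fun h0 => hnz (Fin.last _) (by simp [h0]), fun j p p' hpp => by_contra fun hne => ?_⟩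
    refine hnc _ _ ((tripleEquiv t).injective.ne (a₁ := some (j, p)) (a₂ := some (j, p'))
      (by simp [hne])) 1 ?_
    simpa using hpp
  rintro ⟨hlast, hinj⟩
  refine ⟨fun i => ?_, fun i i' hii' c hc => ?_⟩
  · obtain ⟨_ | ⟨j, p⟩, rfl⟩ := (tripleEquiv t).surjective i
    · simpa using hlast
    · simp [hh.1 j]
  obtain ⟨_ | ⟨j, p⟩, rfl⟩ := (tripleEquiv t).surjective i <;>
    obtain ⟨_ | ⟨j', p'⟩, rfl⟩ := (tripleEquiv t).surjective i' <;>
    simp only [Function.prod_apply, tripleEquiv_none, col_last, col_tripleEquiv_some,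
      Prod.smul_mk, Prod.mk.injEq, smul_zero, smul_eq_mul] at hc
  · exact hii' rfl
  · have hc0 : c = 0 := (smul_eq_zero.mp hc.1.symm).resolve_right (hh.1 j')
    exact hlast (by rw [hc.2, hc0, zero_mul])
  · exact hh.1 j hc.1
  · obtain ⟨h10, -⟩ | ⟨rfl, rfl⟩ := hh.smul_eq_smul ((one_smul K (h j)).trans hc.1)
    · exact one_ne_zero h10
    · have hpp : p = p' := hinj j (by simpa using hc.2)
      exact hii' (by rw [hpp])

end Rows

theorem card_subtype_last_ne_zero_and_injective {K : Type*} [Zero K] :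
    Nat.card {g : Fin (3 * t + 1) → K //
        g (Fin.last _) ≠ 0 ∧ ∀ j, Injective fun p => g (tripleEquiv t (some (j, p)))} =
      Nat.card {a : K // a ≠ 0} * Nat.card (Fin 3 ↪ K) ^ t := by
  let E : (Fin (3 * t + 1) → K) ≃ K × (Fin t → Fin 3 → K) :=
    ((tripleEquiv t).symm.arrowCongr (Equiv.refl K)).trans <|
      Equiv.piOptionEquivProd.trans <| (Equiv.refl K).prodCongr (Equiv.curry _ _ _)
  calc _ = Nat.card {q : K × (Fin t → Fin 3 → K) // q.1 ≠ 0 ∧ ∀ j, Injective (q.2 j)} :=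
        Nat.card_congr (E.subtypeEquiv fun g => Iff.rfl)
    _ = _ := by
      rw [Nat.card_congr (Equiv.subtypeProdEquivProd (p := (· ≠ (0 : K)))
          (q := fun f : Fin t → Fin 3 → K => ∀ j, Injective (f j))), Nat.card_prod,
        Nat.card_congr (Equiv.subtypePiEquivPi (p := fun (_ : Fin t) (f : Fin 3 → K) =>
          Injective f)), Nat.card_pi]
      simp [Nat.card_congr (Equiv.subtypeInjectiveEquivEmbedding (Fin 3) K)]

variable {m : ℕ}

theorem spanCode_eq_ker (h : Fin t → Fin (m - 1) → ZMod 3) :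
    spanCode m t h = LinearMap.ker (Fintype.linearCombination (ZMod 3) (col h)) := by
  ext x
  simp only [spanCode, Set.mem_ofPred_eq, SetLike.mem_coe, LinearMap.mem_ker, funext_iff,
    Pi.zero_apply]
  refine forall_congr' fun r => Eq.congr_left ?_
  rw [Fintype.linearCombination_apply, Finset.sum_apply, ← (tripleEquiv t).sum_comp]
  simp only [Fintype.sum_option, Fintype.sum_prod_type, Fin.sum_univ_three, col_tripleEquiv_some,
    Pi.smul_apply, smul_eq_mul]
  simp [tripleEquiv_some, mul_add, mul_comm]

variable (h : Fin t → Fin (m - 1) → ZMod 3)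

abbrev HammingCode : Type :=
  {D : Set (Fin (3 * t + 1) → ZMod 3) // D ⊆ spanCode m t h ∧ IsLinearCode D ∧ IsPerfectCode D}

abbrev HammingCoset : Type :=
  {D : Set (Fin (3 * t + 1) → ZMod 3) // D ⊆ spanCode m t h ∧
    ∃ (v : Fin (3 * t + 1) → ZMod 3) (D₀ : Set (Fin (3 * t + 1) → ZMod 3)),
      IsLinearCode D₀ ∧ IsPerfectCode D₀ ∧ D = (fun c => v + c) '' D₀}

abbrev HammingRow : Type :=
  {g : Fin (3 * t + 1) → ZMod 3 // IsPerfectCode (rowCoset (col h) g 0)}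

variable {h}

theorem HammingRow.dotProduct_single_last_ne_zero (g : HammingRow h) :
    g.1 ⬝ᵥ Pi.single (Fin.last _) 1 ≠ 0 := by
  have hg := (rowCoset_zero_eq_ker (col h) g.1 ▸ g.2).noncollinear.1 (Fin.last _)
  simpa using hg

theorem linearCombination_col_single_last :
    Fintype.linearCombination (ZMod 3) (col h) (Pi.single (Fin.last _) 1) = 0 := by
  simp

theorem isPerfectCode_rowCoset_col_iff (ht : 2 * t + 1 = 3 ^ (m - 1))
    (g : Fin (3 * t + 1) → ZMod 3) :
    IsPerfectCode (rowCoset (col h) g 0) ↔ Noncollinear (ZMod 3) (Function.prod (col h) g) := by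
  rw [rowCoset_zero_eq_ker]
  refine ⟨IsPerfectCode.noncollinear, fun hg => hg.isPerfectCode_ker ?_⟩
  simp [← ht]
  ring

theorem card_hammingRow (hh : Noncollinear (ZMod 3) h) (ht : 2 * t + 1 = 3 ^ (m - 1)) :
    Nat.card (HammingRow h) = 2 * 6 ^ t := by
  rw [Nat.card_congr (Equiv.subtypeEquivRight fun g =>
      (isPerfectCode_rowCoset_col_iff ht g).trans (noncollinear_prod_col_iff hh g)),
    card_subtype_last_ne_zero_and_injective]
  rw [Nat.card_eq_fintype_card, Nat.card_eq_fintype_card, Fintype.card_embedding_eq]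
  rfl

def HammingRow.smulAddRowComb (g₀ : HammingRow h) (q : (ZMod 3)ˣ × (Fin (m - 1) → ZMod 3)) :
    HammingRow h :=
  ⟨(q.1 : ZMod 3) • g₀.1 + rowComb (col h) q.2, by
    simpa using (rowCoset_smul_add_rowComb q.1.ne_zero g₀.1 q.2 0).symm ▸ g₀.2⟩

theorem HammingRow.smulAddRowComb_injective
    (hsurj : Surjective (Fintype.linearCombination (ZMod 3) (col h))) (g₀ : HammingRow h) :
    Injective g₀.smulAddRowComb := fun _ _ hq =>
  smul_add_rowComb_injective hsurj linearCombination_col_single_last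
    g₀.dotProduct_single_last_ne_zero (congrArg Subtype.val hq)

theorem HammingRow.rowCoset_eq_rowCoset_iff (g₀ g : HammingRow h) (α₀ α : ZMod 3) :
    rowCoset (col h) g.1 α = rowCoset (col h) g₀.1 α₀ ↔
      ∃ q, g₀.smulAddRowComb q = g ∧ α = q.1 * α₀ := by
  constructor
  · intro hg
    obtain ⟨c, r, hgr, hα⟩ := exists_eq_smul_add_rowComb_of_rowCoset_eq
      linearCombination_col_single_last g.dotProduct_single_last_ne_zero
      g₀.dotProduct_single_last_ne_zero hg
    exact ⟨(c, r), Subtype.ext hgr.symm, hα⟩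
  · rintro ⟨q, rfl, rfl⟩
    exact rowCoset_smul_add_rowComb q.1.ne_zero _ _ _

variable (h)

def toHammingCode (g : HammingRow h) : HammingCode h :=
  ⟨rowCoset (col h) g.1 0, spanCode_eq_ker h ▸ rowCoset_subset_ker _ _ _,
    rowCoset_zero_eq_ker (col h) g.1 ▸ isLinearCode_coe_submodule _, g.2⟩

def toHammingCoset (q : HammingRow h × ZMod 3) : HammingCoset h :=
  ⟨rowCoset (col h) q.1.1 q.2, spanCode_eq_ker h ▸ rowCoset_subset_ker _ _ _,
    (exists_rowCoset_eq_image_add linearCombination_col_single_last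
      q.1.dotProduct_single_last_ne_zero q.2).imp fun _ hp =>
        ⟨_, (toHammingCode h q.1).2.2.1, q.1.2, hp⟩⟩

variable {h}

theorem toHammingCode_surjective (hnz : ∀ j, h j ≠ 0) : Surjective (toHammingCode h) := by
  rintro ⟨D, hDS, hlin, hperf⟩
  obtain ⟨g, rfl⟩ := hperf.exists_eq_rowCoset hlin (spanCode_eq_ker h ▸ hDS)
    fun _ hi => col_ne_zero hnz hi
  exact ⟨⟨g, hperf⟩, rfl⟩

theorem toHammingCoset_surjective (hnz : ∀ j, h j ≠ 0) : Surjective (toHammingCoset h) := by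
  rintro ⟨D, hDS, v, D₀, hlin, hperf, rfl⟩
  rw [spanCode_eq_ker] at hDS
  have hv : Fintype.linearCombination (ZMod 3) (col h) v = 0 := hDS ⟨0, hlin.1, add_zero v⟩
  have hD₀ : D₀ ⊆ LinearMap.ker (Fintype.linearCombination (ZMod 3) (col h)) := fun y hy => by
    simpa [hv] using hDS ⟨y, hy, rfl⟩
  obtain ⟨g, rfl⟩ := hperf.exists_eq_rowCoset hlin hD₀ fun _ hi => col_ne_zero hnz hi
  exact ⟨(⟨g, hperf⟩, g ⬝ᵥ v), Subtype.ext (image_add_rowCoset_zero hv g).symm⟩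

theorem nonempty_fiber_toHammingCode (hnz : ∀ j, h j ≠ 0)
    (hsurj : Surjective (Fintype.linearCombination (ZMod 3) (col h))) (D : HammingCode h) :
    Nonempty ({g // toHammingCode h g = D} ≃ (ZMod 3)ˣ × (Fin (m - 1) → ZMod 3)) := by
  obtain ⟨g₀, rfl⟩ := toHammingCode_surjective hnz D
  refine ⟨(Equiv.subtypeEquivRight fun g => ?_).trans
    (Equiv.ofInjective _ (g₀.smulAddRowComb_injective hsurj)).symm⟩
  rw [Subtype.ext_iff]
  simpa [toHammingCode] using g₀.rowCoset_eq_rowCoset_iff g 0 0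

theorem nonempty_fiber_toHammingCoset (hnz : ∀ j, h j ≠ 0)
    (hsurj : Surjective (Fintype.linearCombination (ZMod 3) (col h))) (D : HammingCoset h) :
    Nonempty ({q // toHammingCoset h q = D} ≃ (ZMod 3)ˣ × (Fin (m - 1) → ZMod 3)) := by
  obtain ⟨⟨g₀, α₀⟩, rfl⟩ := toHammingCoset_surjective hnz D
  have hinj : Injective fun q => (g₀.smulAddRowComb q, (q.1 : ZMod 3) * α₀) :=
    fun _ _ hq => g₀.smulAddRowComb_injective hsurj (congrArg Prod.fst hq)
  refine ⟨(Equiv.subtypeEquivRight fun q => ?_).trans (Equiv.ofInjective _ hinj).symm⟩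
  rw [Subtype.ext_iff]
  simpa [toHammingCoset, Prod.ext_iff, eq_comm] using g₀.rowCoset_eq_rowCoset_iff q.1 α₀ q.2

end SpanCode

open SpanCode

/-- For `n = (3^m-1)/2 = 3t+1`, the number of ternary Hamming codes
(linear 1-perfect codes) contained in `S` equals `6^t / 3^{m-1}`, and the number of
cosets of Hamming codes contained in `S` equals `6^t / 3^{m-2}`. -/
theorem stmt_15 (m t : ℕ) (hm : 2 ≤ m) (ht : 2 * t + 1 = 3 ^ (m - 1))
    (h : Fin t → Fin (m - 1) → ZMod 3)
    (hnz : ∀ j, h j ≠ 0)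
    (hnc : ∀ i j, i ≠ j → ∀ c : ZMod 3, h i ≠ c • h j) :
    Nat.card {D : Set (Fin (3 * t + 1) → ZMod 3) //
        D ⊆ spanCode m t h ∧ IsLinearCode D ∧ IsPerfectCode D} * 3 ^ (m - 1) = 6 ^ t ∧
    Nat.card {D : Set (Fin (3 * t + 1) → ZMod 3) //
        D ⊆ spanCode m t h ∧ ∃ (v : Fin (3 * t + 1) → ZMod 3)
          (D₀ : Set (Fin (3 * t + 1) → ZMod 3)),
          IsLinearCode D₀ ∧ IsPerfectCode D₀ ∧ D = (fun c => v + c) '' D₀} *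
      3 ^ (m - 2) = 6 ^ t := by
  have hh : Noncollinear (ZMod 3) h := ⟨hnz, hnc⟩
  have hsurj := surjective_linearCombination_col hh (by rw [natCard_units_zmod_three]; simp [← ht])
  have hfiber : Nat.card ((ZMod 3)ˣ × (Fin (m - 1) → ZMod 3)) = 2 * 3 ^ (m - 1) := by
    rw [Nat.card_prod, natCard_units_zmod_three]
    simp
  have hcodes := card_eq_card_mul_of_fiber_equiv _ (nonempty_fiber_toHammingCode hnz hsurj)
  have hcosets := card_eq_card_mul_of_fiber_equiv _ (nonempty_fiber_toHammingCoset hnz hsurj)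
  rw [card_hammingRow hh ht, hfiber] at hcodes
  rw [Nat.card_prod, card_hammingRow hh ht, hfiber, Nat.card_zmod] at hcosets
  obtain ⟨k, rfl⟩ : ∃ k, m = k + 2 := ⟨m - 2, by omega⟩
  rw [show k + 2 - 1 = k + 1 by omega, pow_succ] at hcodes hcosets ⊢
  rw [Nat.add_sub_cancel]
  constructor <;> linarith
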